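/- arXiv:1202.0972 — 2 statements merged into one kernel-verified Lean document; each statement's English description precedes it below -/
import Mathlib

section
/- Let Q ∈ W, N = (m₃,m₂,m₁), and T(Q) = (conj(Q₃₁)/m₂ − conj(Q₂₃)/m₁, conj(Q₂₃)/m₁ − conj(Q₁₂)/m₃, conj(Q₁₂)/m₃ − conj(Q₃₁)/m₂). Then: (i) Q, N and T(Q) are pairwise orthogonal with respect to the Hermitian mass metric, i.e. ⟨Q,N⟩ₘ = ⟨Q,T(Q)⟩ₘ = ⟨N,T(Q)⟩ₘ = 0; (ii) T(Q) ∈ W; (iii) |T(Q)|² = (m/(m₁m₂m₃))·|Q|² (mass norms); and (iv) if Q ≠ 0 then T(Q) ≠ 0 and {Q, N, T(Q)} is a ℂ-basis of ℂ³. -/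
/-!
The orthogonality relations, `T(Q) ∈ W` and the norm identity are direct computations (for
`Q ⊥ N`: `⟨Q,N⟩ₘ = (m₁m₂m₃/m)·conj(Q₁₂+Q₃₁+Q₂₃)`). The norm identity forces `T(Q) ≠ 0` when
`Q ≠ 0`, and three pairwise orthogonal vectors of nonzero mass norm are linearly independent,
hence a basis of `ℂ³`.
-/

noncomputable section
open Complex ComplexConjugate

/-- Hermitian mass metric `⟨V,W⟩ₘ`. -/
def massInner (m₁ m₂ m₃ : ℝ) (V W : ℂ × ℂ × ℂ) : ℂ :=
  ((m₁ * m₂ : ℝ) : ℂ) * conj V.1 * W.1 / ((m₁ + m₂ + m₃ : ℝ) : ℂ) +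
    ((m₃ * m₁ : ℝ) : ℂ) * conj V.2.1 * W.2.1 / ((m₁ + m₂ + m₃ : ℝ) : ℂ) +
    ((m₂ * m₃ : ℝ) : ℂ) * conj V.2.2 * W.2.2 / ((m₁ + m₂ + m₃ : ℝ) : ℂ)

/-- Squared mass norm `|Q|²`. -/
def massSq (m₁ m₂ m₃ : ℝ) (Q : ℂ × ℂ × ℂ) : ℝ :=
  (m₁ * m₂ * Complex.normSq Q.1 + m₃ * m₁ * Complex.normSq Q.2.1 +
    m₂ * m₃ * Complex.normSq Q.2.2) / (m₁ + m₂ + m₃)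

/-- The tangent vector `T(Q)`. -/
def Tvec (m₁ m₂ m₃ : ℝ) (Q : ℂ × ℂ × ℂ) : ℂ × ℂ × ℂ :=
  (conj Q.2.1 / (m₂ : ℂ) - conj Q.2.2 / (m₁ : ℂ),
   conj Q.2.2 / (m₁ : ℂ) - conj Q.1 / (m₃ : ℂ),
   conj Q.1 / (m₃ : ℂ) - conj Q.2.1 / (m₂ : ℂ))

theorem existsUnique_eq_smul_add_smul_add_smul {K : Type*} [Field K] {u v w : K × K × K}
    (h : ∀ c : K × K × K, c.1 • u + c.2.1 • v + c.2.2 • w = 0 → c = 0) (x : K × K × K) :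
    ∃! c : K × K × K, x = c.1 • u + c.2.1 • v + c.2.2 • w := by
  let f : (K × K × K) →ₗ[K] K × K × K :=
    { toFun := fun c => c.1 • u + c.2.1 • v + c.2.2 • w
      map_add' := fun c d => by simp only [Prod.fst_add, Prod.snd_add, add_smul]; abel
      map_smul' := fun a c => by
        simp only [Prod.smul_fst, Prod.smul_snd, smul_eq_mul, mul_smul, RingHom.id_apply,
          smul_add] }
  have hf : Function.Injective f := (injective_iff_map_eq_zero f).2 h
  simpa only [eq_comm, f, LinearMap.coe_mk, AddHom.coe_mk] using
    (Function.Bijective.existsUnique ⟨hf, LinearMap.injective_iff_surjective.1 hf⟩ x)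

section MassMetric

variable (m₁ m₂ m₃ : ℝ)

@[simp]
theorem massInner_add_right (V A B : ℂ × ℂ × ℂ) :
    massInner m₁ m₂ m₃ V (A + B) = massInner m₁ m₂ m₃ V A + massInner m₁ m₂ m₃ V B := by
  simp only [massInner, Prod.fst_add, Prod.snd_add]
  ring

@[simp]
theorem massInner_smul_right (V A : ℂ × ℂ × ℂ) (c : ℂ) :
    massInner m₁ m₂ m₃ V (c • A) = c * massInner m₁ m₂ m₃ V A := by
  simp only [massInner, Prod.smul_fst, Prod.smul_snd, smul_eq_mul]
  ring

@[simp]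
theorem massInner_zero_right (V : ℂ × ℂ × ℂ) : massInner m₁ m₂ m₃ V 0 = 0 := by
  simp [massInner]

theorem massInner_conj_symm (V W : ℂ × ℂ × ℂ) :
    conj (massInner m₁ m₂ m₃ W V) = massInner m₁ m₂ m₃ V W := by
  simp only [massInner, map_add, map_div₀, map_mul, conj_conj, conj_ofReal]
  ring

theorem massInner_eq_zero_comm {V W : ℂ × ℂ × ℂ} :
    massInner m₁ m₂ m₃ V W = 0 ↔ massInner m₁ m₂ m₃ W V = 0 := by
  rw [← massInner_conj_symm, map_eq_zero]

theorem massInner_self (V : ℂ × ℂ × ℂ) :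
    massInner m₁ m₂ m₃ V V = massSq m₁ m₂ m₃ V := by
  simp only [massInner, massSq]
  push_cast [normSq_eq_conj_mul_self]
  ring

variable {m₁ m₂ m₃}

theorem massSq_pos (hm₁ : 0 < m₁) (hm₂ : 0 < m₂) (hm₃ : 0 < m₃) {V : ℂ × ℂ × ℂ}
    (hV : V ≠ 0) : 0 < massSq m₁ m₂ m₃ V := by
  have hV' : V.1 ≠ 0 ∨ V.2.1 ≠ 0 ∨ V.2.2 ≠ 0 := by
    contrapose! hV
    exact Prod.ext hV.1 (Prod.ext hV.2.1 hV.2.2)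
  refine div_pos ?_ (by positivity)
  rcases hV' with h | h | h <;> have := normSq_pos.2 h <;>
    nlinarith [normSq_nonneg V.1, normSq_nonneg V.2.1, normSq_nonneg V.2.2, mul_pos hm₁ hm₂,
      mul_pos hm₃ hm₁, mul_pos hm₂ hm₃]

theorem massInner_self_ne_zero (hm₁ : 0 < m₁) (hm₂ : 0 < m₂) (hm₃ : 0 < m₃)
    {V : ℂ × ℂ × ℂ} (hV : V ≠ 0) : massInner m₁ m₂ m₃ V V ≠ 0 := by
  rw [massInner_self]
  exact ofReal_ne_zero.2 (massSq_pos hm₁ hm₂ hm₃ hV).ne'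

theorem eq_zero_of_smul_add_smul_add_smul_eq_zero {u v w : ℂ × ℂ × ℂ}
    (hu : massInner m₁ m₂ m₃ u u ≠ 0) (hv : massInner m₁ m₂ m₃ v v ≠ 0)
    (hw : massInner m₁ m₂ m₃ w w ≠ 0) (huv : massInner m₁ m₂ m₃ u v = 0)
    (huw : massInner m₁ m₂ m₃ u w = 0) (hvw : massInner m₁ m₂ m₃ v w = 0)
    (c : ℂ × ℂ × ℂ) (hc : c.1 • u + c.2.1 • v + c.2.2 • w = 0) : c = 0 := by
  have hvu := (massInner_eq_zero_comm m₁ m₂ m₃).1 huv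
  have hwu := (massInner_eq_zero_comm m₁ m₂ m₃).1 huw
  have hwv := (massInner_eq_zero_comm m₁ m₂ m₃).1 hvw
  have inner_comb : ∀ z, c.1 * massInner m₁ m₂ m₃ z u + c.2.1 * massInner m₁ m₂ m₃ z v +
      c.2.2 * massInner m₁ m₂ m₃ z w = 0 := fun z => by
    simpa using congrArg (massInner m₁ m₂ m₃ z) hc
  have h₁ := inner_comb u
  have h₂ := inner_comb v
  have h₃ := inner_comb w
  simp only [huv, huw, hvu, hvw, hwu, hwv, mul_zero, add_zero, zero_add, mul_eq_zero, hu, hv, hw,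
    or_false] at h₁ h₂ h₃
  exact Prod.ext h₁ (Prod.ext h₂ h₃)

theorem massInner_masses_eq_zero {Q : ℂ × ℂ × ℂ} (hW : Q.1 + Q.2.1 + Q.2.2 = 0) :
    massInner m₁ m₂ m₃ Q ((m₃ : ℂ), (m₂ : ℂ), (m₁ : ℂ)) = 0 := by
  have hW' : conj Q.1 + conj Q.2.1 + conj Q.2.2 = 0 := by simp only [← map_add, hW, map_zero]
  simp only [massInner, ← add_div]
  push_cast
  linear_combination ((m₁ : ℂ) * m₂ * m₃ / (m₁ + m₂ + m₃)) * hW'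

theorem massInner_masses_Tvec_eq_zero (Q : ℂ × ℂ × ℂ) :
    massInner m₁ m₂ m₃ ((m₃ : ℂ), (m₂ : ℂ), (m₁ : ℂ)) (Tvec m₁ m₂ m₃ Q) = 0 := by
  simp only [massInner, Tvec, conj_ofReal]
  push_cast
  ring

theorem massInner_Tvec_eq_zero (hm₁ : m₁ ≠ 0) (hm₂ : m₂ ≠ 0) (hm₃ : m₃ ≠ 0) (Q : ℂ × ℂ × ℂ) :
    massInner m₁ m₂ m₃ Q (Tvec m₁ m₂ m₃ Q) = 0 := by
  have : (m₁ : ℂ) ≠ 0 := ofReal_ne_zero.2 hm₁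
  have : (m₂ : ℂ) ≠ 0 := ofReal_ne_zero.2 hm₂
  have : (m₃ : ℂ) ≠ 0 := ofReal_ne_zero.2 hm₃
  simp only [massInner, Tvec]
  field_simp
  push_cast
  ring

theorem Tvec_sum_eq_zero (Q : ℂ × ℂ × ℂ) :
    (Tvec m₁ m₂ m₃ Q).1 + (Tvec m₁ m₂ m₃ Q).2.1 + (Tvec m₁ m₂ m₃ Q).2.2 = 0 := by
  simp only [Tvec]
  ring

theorem massSq_Tvec (hm₁ : m₁ ≠ 0) (hm₂ : m₂ ≠ 0) (hm₃ : m₃ ≠ 0) {Q : ℂ × ℂ × ℂ}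
    (hW : Q.1 + Q.2.1 + Q.2.2 = 0) :
    massSq m₁ m₂ m₃ (Tvec m₁ m₂ m₃ Q) = (m₁ + m₂ + m₃) / (m₁ * m₂ * m₃) * massSq m₁ m₂ m₃ Q := by
  obtain ⟨a, b, c⟩ := Q
  obtain rfl : c = -a - b := by linear_combination hW
  have : (m₁ : ℂ) ≠ 0 := ofReal_ne_zero.2 hm₁
  have : (m₂ : ℂ) ≠ 0 := ofReal_ne_zero.2 hm₂
  have : (m₃ : ℂ) ≠ 0 := ofReal_ne_zero.2 hm₃
  apply ofReal_injective
  simp only [massSq]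
  push_cast [normSq_eq_conj_mul_self]
  simp only [Tvec, map_sub, map_neg, map_div₀, conj_conj, conj_ofReal]
  field_simp
  ring

theorem Tvec_ne_zero (hm₁ : 0 < m₁) (hm₂ : 0 < m₂) (hm₃ : 0 < m₃) {Q : ℂ × ℂ × ℂ}
    (hW : Q.1 + Q.2.1 + Q.2.2 = 0) (hQ : Q ≠ 0) : Tvec m₁ m₂ m₃ Q ≠ 0 := by
  intro hT
  have hpos : 0 < (m₁ + m₂ + m₃) / (m₁ * m₂ * m₃) * massSq m₁ m₂ m₃ Q :=
    mul_pos (by positivity) (massSq_pos hm₁ hm₂ hm₃ hQ)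
  rw [← massSq_Tvec hm₁.ne' hm₂.ne' hm₃.ne' hW, hT] at hpos
  simp [massSq] at hpos

end MassMetric

/-- for `Q ∈ W`, with `N = (m₃,m₂,m₁)` and `T = T(Q)`:
(i) `Q ⊥ N`, `Q ⊥ T`, `N ⊥ T` for the mass metric, (ii) `T ∈ W`,
(iii) `|T|² = (m/(m₁m₂m₃))|Q|²`, (iv) if `Q ≠ 0` then `T ≠ 0` and
`{Q, N, T}` is a ℂ-basis of ℂ³. -/
theorem stmt4 (m₁ m₂ m₃ : ℝ) (hm₁ : 0 < m₁) (hm₂ : 0 < m₂) (hm₃ : 0 < m₃)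
    (Q : ℂ × ℂ × ℂ) (hW : Q.1 + Q.2.1 + Q.2.2 = 0) :
    let N : ℂ × ℂ × ℂ := ((m₃ : ℂ), (m₂ : ℂ), (m₁ : ℂ))
    let T : ℂ × ℂ × ℂ := Tvec m₁ m₂ m₃ Q
    -- (i)
    massInner m₁ m₂ m₃ Q N = 0 ∧ massInner m₁ m₂ m₃ Q T = 0 ∧
      massInner m₁ m₂ m₃ N T = 0 ∧
    -- (ii)
    T.1 + T.2.1 + T.2.2 = 0 ∧
    -- (iii)
    massSq m₁ m₂ m₃ T = ((m₁ + m₂ + m₃) / (m₁ * m₂ * m₃)) * massSq m₁ m₂ m₃ Q ∧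
    -- (iv)
    (Q ≠ 0 → T ≠ 0 ∧
      ∀ v : ℂ × ℂ × ℂ, ∃! c : ℂ × ℂ × ℂ, v = c.1 • Q + c.2.1 • N + c.2.2 • T) := by
  intro N T
  have hQN : massInner m₁ m₂ m₃ Q N = 0 := massInner_masses_eq_zero hW
  have hQT : massInner m₁ m₂ m₃ Q T = 0 := massInner_Tvec_eq_zero hm₁.ne' hm₂.ne' hm₃.ne' Q
  have hNT : massInner m₁ m₂ m₃ N T = 0 := massInner_masses_Tvec_eq_zero Q
  refine ⟨hQN, hQT, hNT, Tvec_sum_eq_zero Q, massSq_Tvec hm₁.ne' hm₂.ne' hm₃.ne' hW, fun hQ => ?_⟩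
  have hT : T ≠ 0 := Tvec_ne_zero hm₁ hm₂ hm₃ hW hQ
  have hN : N ≠ 0 := fun h => hm₃.ne' (by simpa [N] using congrArg Prod.fst h)
  refine ⟨hT, existsUnique_eq_smul_add_smul_add_smul ?_⟩
  exact eq_zero_of_smul_add_smul_add_smul_eq_zero (massInner_self_ne_zero hm₁ hm₂ hm₃ hQ)
    (massInner_self_ne_zero hm₁ hm₂ hm₃ hN) (massInner_self_ne_zero hm₁ hm₂ hm₃ hT) hQN hQT hNT
end
end

section
/- Let X ∈ W with X ≠ 0, let Y ∈ ℂ³ satisfy Re⟨Y,X⟩ = 0 (evaluation pairing), let r > 0 and p_r ∈ ℝ, and set P = (p_r/|X|)·X* + (|X|/r)·Y, where X* = (1/m)(m₁m₂X₁₂, m₃m₁X₃₁, m₂m₃X₂₃) and |X| is the mass norm. Then the kinetic energy splits as K(P) = (1/2)p_r² + (|X|²/r²)·K(Y). -/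
/-!
The kinetic form `K` is the quadratic form of a Hermitian form `kePair`, and `X*` represents the
evaluation pairing through it: `kePair X* Y = ⟨X, Y⟩` whenever `X ∈ W`. Expanding
`K(a X* + b Y)` therefore gives `a² K(X*) + a b Re⟨X, Y⟩ + b² K(Y)`, where the cross term is
`Re⟨Y, X⟩ = 0` and `K(X*) = ½ Re⟨X, X*⟩ = ½ |X|²`; then take `a = p_r / |X|` and `b = |X| / r`.
-/

noncomputable section
open Complex ComplexConjugate

/-- Hermitian evaluation pairing `⟨P,Q⟩`. -/
def epair (P Q : ℂ × ℂ × ℂ) : ℂ :=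
  conj P.1 * Q.1 + conj P.2.1 * Q.2.1 + conj P.2.2 * Q.2.2

/-- Kinetic energy form `K(P)`. -/
def KE (m₁ m₂ m₃ : ℝ) (P : ℂ × ℂ × ℂ) : ℝ :=
  Complex.normSq (P.1 - P.2.1) / (2 * m₁) + Complex.normSq (P.2.2 - P.1) / (2 * m₂) +
    Complex.normSq (P.2.1 - P.2.2) / (2 * m₃)

/-- The dual covector `X*` of `X` for the mass metric. -/
def dualVec (m₁ m₂ m₃ : ℝ) (X : ℂ × ℂ × ℂ) : ℂ × ℂ × ℂ :=
  (((m₁ * m₂ / (m₁ + m₂ + m₃) : ℝ) : ℂ) * X.1,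
   ((m₃ * m₁ / (m₁ + m₂ + m₃) : ℝ) : ℂ) * X.2.1,
   ((m₂ * m₃ / (m₁ + m₂ + m₃) : ℝ) : ℂ) * X.2.2)

section

variable {m₁ m₂ m₃ : ℝ}

def kePair (m₁ m₂ m₃ : ℝ) (U V : ℂ × ℂ × ℂ) : ℂ :=
  conj (U.1 - U.2.1) * (V.1 - V.2.1) / m₁ + conj (U.2.2 - U.1) * (V.2.2 - V.1) / m₂ +
    conj (U.2.1 - U.2.2) * (V.2.1 - V.2.2) / m₃

lemma KE_eq_kePair_re (U : ℂ × ℂ × ℂ) : KE m₁ m₂ m₃ U = (kePair m₁ m₂ m₃ U U).re / 2 := by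
  simp only [KE, kePair, ← normSq_eq_conj_mul_self, add_re, div_ofReal_re, ofReal_re]
  ring

lemma KE_ofReal_smul_add (a b : ℝ) (U V : ℂ × ℂ × ℂ) :
    KE m₁ m₂ m₃ ((a : ℂ) • U + (b : ℂ) • V) =
      a ^ 2 * KE m₁ m₂ m₃ U + a * b * (kePair m₁ m₂ m₃ U V).re + b ^ 2 * KE m₁ m₂ m₃ V := by
  obtain ⟨u₁, u₂, u₃⟩ := U
  obtain ⟨v₁, v₂, v₃⟩ := V
  simp only [KE, kePair, Prod.smul_mk, Prod.mk_add_mk, smul_eq_mul, normSq_apply, add_re, add_im,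
    sub_re, sub_im, mul_re, mul_im, ofReal_re, ofReal_im, conj_re, conj_im, div_ofReal_re]
  ring

lemma re_epair_comm (P Q : ℂ × ℂ × ℂ) : (epair P Q).re = (epair Q P).re := by
  simp only [epair, add_re, mul_re, conj_re, conj_im]
  ring

lemma epair_dualVec (X : ℂ × ℂ × ℂ) : epair X (dualVec m₁ m₂ m₃ X) = massSq m₁ m₂ m₃ X := by
  simp only [epair, dualVec, massSq, mul_left_comm (conj _), ← normSq_eq_conj_mul_self]
  push_cast
  ring

lemma massSq_pos_s5 (h₁ : 0 < m₁) (h₂ : 0 < m₂) (h₃ : 0 < m₃) {X : ℂ × ℂ × ℂ} (hX : X ≠ 0) :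
    0 < massSq m₁ m₂ m₃ X := by
  obtain ⟨x₁, x₂, x₃⟩ := X
  have hx : x₁ ≠ 0 ∨ x₂ ≠ 0 ∨ x₃ ≠ 0 := by
    contrapose! hX
    simp [hX]
  have := normSq_nonneg x₁; have := normSq_nonneg x₂; have := normSq_nonneg x₃
  unfold massSq
  rcases hx with hx | hx | hx <;> have := normSq_pos.2 hx <;> positivity

/- `K` only sees differences of components, so it cannot tell `Y` from `Y + c • (1, 1, 1)`;
`epair X` cannot either exactly when `X ∈ W`. -/
lemma kePair_dualVec (h₁ : m₁ ≠ 0) (h₂ : m₂ ≠ 0) (h₃ : m₃ ≠ 0) (hm : m₁ + m₂ + m₃ ≠ 0)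
    {X : ℂ × ℂ × ℂ} (hW : X.1 + X.2.1 + X.2.2 = 0) (Y : ℂ × ℂ × ℂ) :
    kePair m₁ m₂ m₃ (dualVec m₁ m₂ m₃ X) Y = epair X Y := by
  obtain ⟨x₁, x₂, x₃⟩ := X
  obtain rfl : x₃ = -x₁ - x₂ := by linear_combination hW
  have h₁' : (m₁ : ℂ) ≠ 0 := ofReal_ne_zero.2 h₁
  have h₂' : (m₂ : ℂ) ≠ 0 := ofReal_ne_zero.2 h₂
  have h₃' : (m₃ : ℂ) ≠ 0 := ofReal_ne_zero.2 h₃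
  have hm' : (m₁ : ℂ) + m₂ + m₃ ≠ 0 := by exact_mod_cast hm
  simp only [kePair, epair, dualVec, map_sub, map_mul, map_neg, conj_ofReal]
  push_cast
  field_simp
  ring

lemma KE_dualVec (h₁ : m₁ ≠ 0) (h₂ : m₂ ≠ 0) (h₃ : m₃ ≠ 0) (hm : m₁ + m₂ + m₃ ≠ 0)
    {X : ℂ × ℂ × ℂ} (hW : X.1 + X.2.1 + X.2.2 = 0) :
    KE m₁ m₂ m₃ (dualVec m₁ m₂ m₃ X) = massSq m₁ m₂ m₃ X / 2 := by
  rw [KE_eq_kePair_re, kePair_dualVec h₁ h₂ h₃ hm hW, epair_dualVec, ofReal_re]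

end

theorem stmt5_general (m₁ m₂ m₃ : ℝ) (hm₁ : 0 < m₁) (hm₂ : 0 < m₂) (hm₃ : 0 < m₃)
    (X Y : ℂ × ℂ × ℂ) (r p_r : ℝ)
    (hW : X.1 + X.2.1 + X.2.2 = 0) (hX : X ≠ 0)
    (hY : (epair Y X).re = 0) :
    let nX : ℝ := Real.sqrt (massSq m₁ m₂ m₃ X)
    let P : ℂ × ℂ × ℂ := ((p_r / nX : ℝ) : ℂ) • dualVec m₁ m₂ m₃ X +
      ((nX / r : ℝ) : ℂ) • Y
    KE m₁ m₂ m₃ P = (1 / 2) * p_r ^ 2 + (massSq m₁ m₂ m₃ X / r ^ 2) * KE m₁ m₂ m₃ Y := by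
  intro nX P
  have hpos := massSq_pos_s5 hm₁ hm₂ hm₃ hX
  have hnX : nX ^ 2 = massSq m₁ m₂ m₃ X := Real.sq_sqrt hpos.le
  have hnX₀ : nX ≠ 0 := (Real.sqrt_pos.2 hpos).ne'
  have hm : m₁ + m₂ + m₃ ≠ 0 := by positivity
  rw [KE_ofReal_smul_add, KE_dualVec hm₁.ne' hm₂.ne' hm₃.ne' hm hW,
    kePair_dualVec hm₁.ne' hm₂.ne' hm₃.ne' hm hW, re_epair_comm, hY, ← hnX]
  field_simp
  ring

/-- spherical splitting of the kinetic energy,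
`K(P) = ½ p_r² + (|X|²/r²) K(Y)` for `P = (p_r/|X|) X* + (|X|/r) Y`. -/
theorem stmt5 (m₁ m₂ m₃ : ℝ) (hm₁ : 0 < m₁) (hm₂ : 0 < m₂) (hm₃ : 0 < m₃)
    (X Y : ℂ × ℂ × ℂ) (r p_r : ℝ)
    (hW : X.1 + X.2.1 + X.2.2 = 0) (hX : X ≠ 0) (hr : 0 < r)
    (hY : (epair Y X).re = 0) :
    let nX : ℝ := Real.sqrt (massSq m₁ m₂ m₃ X)
    let P : ℂ × ℂ × ℂ := ((p_r / nX : ℝ) : ℂ) • dualVec m₁ m₂ m₃ X +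
      ((nX / r : ℝ) : ℂ) • Y
    KE m₁ m₂ m₃ P = (1 / 2) * p_r ^ 2 + (massSq m₁ m₂ m₃ X / r ^ 2) * KE m₁ m₂ m₃ Y :=
  stmt5_general m₁ m₂ m₃ hm₁ hm₂ hm₃ X Y r p_r hW hX hY
end
end
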